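/- arXiv:1408.2783 — 3 statements merged into one kernel-verified Lean document; each statement's English description precedes it below -/
import Mathlib

section
/- Let 0 < α < 1 and λ > 0. Define the operator T on functions f : ℝ → ℝ by (T f)(t) = ∫₀ᵗ (1/Γ(1−α)) (∫₀^ξ (ξ−τ)^(−α) · f′(τ) dτ) dξ, i.e. T is the time integral J_t of the Caputo fractional derivative of order α. Then for every natural number n ≥ 1 and every t > 0, the n-fold iterate satisfies (T^[n] (s ↦ s^λ))(t) = (Γ(1+λ) / Γ(1 + λ + n(1−α))) · t^(λ + n(1−α)). -/
open Real MeasureTheory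

/-- `caputoJ α f` is the time integral `J_t` of the Caputo fractional derivative of
order `α` of `f`: `(J_t ᶜD^α f)(t) = ∫₀ᵗ (1/Γ(1-α)) ∫₀^ξ (ξ-τ)^(-α) f'(τ) dτ dξ`. -/
noncomputable def caputoJ (α : ℝ) (f : ℝ → ℝ) : ℝ → ℝ :=
  fun t => ∫ ξ in (0:ℝ)..t,
    (1 / Real.Gamma (1 - α)) * ∫ τ in (0:ℝ)..ξ, (ξ - τ) ^ (-α) * deriv f τ

/-- Real scaled Beta integral. -/
lemma beta_scaled_real {ξ μ α : ℝ} (hξ : 0 < ξ) (hμ : 0 < μ) (hα0 : 0 < α) (hα1 : α < 1) :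
    ∫ τ in (0:ℝ)..ξ, (ξ - τ) ^ (-α) * τ ^ (μ - 1) =
      ξ ^ (μ - α) * (Real.Gamma μ * Real.Gamma (1 - α) / Real.Gamma (μ + 1 - α)) := by
  have h1α : (0:ℝ) < 1 - α := by linarith
  have hsum : (0:ℝ) < μ + 1 - α := by linarith
  have hΓsum : Real.Gamma (μ + 1 - α) ≠ 0 := (Real.Gamma_pos_of_pos hsum).ne'
  -- complex scaled beta
  have hscaled := Complex.betaIntegral_scaled (μ : ℂ) ((1 - α : ℝ) : ℂ) hξ
  have hbeta : Complex.betaIntegral (μ : ℂ) ((1 - α : ℝ) : ℂ) =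
      ((Real.Gamma μ * Real.Gamma (1 - α) / Real.Gamma (μ + 1 - α) : ℝ) : ℂ) := by
    have hre1 : 0 < Complex.re (μ : ℂ) := by simpa using hμ
    have hre2 : 0 < Complex.re ((1 - α : ℝ) : ℂ) := by simpa using h1α
    have h := Complex.Gamma_mul_Gamma_eq_betaIntegral hre1 hre2
    have hadd : (μ : ℂ) + ((1 - α : ℝ) : ℂ) = ((μ + 1 - α : ℝ) : ℂ) := by push_cast; ring
    rw [hadd] at h
    rw [Complex.Gamma_ofReal, Complex.Gamma_ofReal, Complex.Gamma_ofReal] at h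
    have hΓc : ((Real.Gamma (μ + 1 - α) : ℂ)) ≠ 0 := by exact_mod_cast hΓsum
    rw [Complex.ofReal_div, Complex.ofReal_mul, eq_div_iff hΓc, mul_comm]
    exact h.symm
  -- rewrite the complex integrand as ofReal of the real one
  have hint : (∫ x in (0:ℝ)..ξ, (x : ℂ) ^ ((μ : ℂ) - 1) * ((ξ : ℂ) - x) ^ (((1 - α : ℝ) : ℂ) - 1)) =
      ((∫ τ in (0:ℝ)..ξ, (ξ - τ) ^ (-α) * τ ^ (μ - 1) : ℝ) : ℂ) := by
    rw [← intervalIntegral.integral_ofReal]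
    apply intervalIntegral.integral_congr
    intro x hx
    rw [Set.uIcc_of_le hξ.le] at hx
    obtain ⟨hx0, hxξ⟩ := hx
    have h1 : ((x : ℝ) : ℂ) ^ ((μ : ℂ) - 1) = (((x ^ (μ - 1) : ℝ)) : ℂ) := by
      rw [Complex.ofReal_cpow hx0]; push_cast; ring_nf
    have h2 : ((ξ : ℂ) - (x : ℂ)) ^ (((1 - α : ℝ) : ℂ) - 1) = (((ξ - x) ^ (-α) : ℝ) : ℂ) := by
      rw [(by push_cast; ring : (ξ : ℂ) - (x : ℂ) = ((ξ - x : ℝ) : ℂ)),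
        Complex.ofReal_cpow (by linarith : (0:ℝ) ≤ ξ - x)]
      push_cast; ring_nf
    dsimp only
    rw [h1, h2]
    push_cast
    ring
  rw [hint, hbeta] at hscaled
  have hpow : (ξ : ℂ) ^ ((μ : ℂ) + ((1 - α : ℝ) : ℂ) - 1) = ((ξ ^ (μ - α) : ℝ) : ℂ) := by
    rw [(by push_cast; ring : (μ : ℂ) + ((1 - α : ℝ) : ℂ) - 1 = ((μ - α : ℝ) : ℂ)),
      Complex.ofReal_cpow hξ.le]
  rw [hpow, ← Complex.ofReal_mul] at hscaled
  exact_mod_cast hscaled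

/-- One application of `caputoJ` on a power function. -/
lemma caputoJ_rpow {α μ : ℝ} (c : ℝ) (hα0 : 0 < α) (hα1 : α < 1) (hμ : 0 < μ) {t : ℝ}
    (ht : 0 < t) :
    caputoJ α (fun s => c * s ^ μ) t =
      c * (Real.Gamma (μ + 1) / Real.Gamma (μ + 2 - α)) * t ^ (μ + 1 - α) := by
  have h1α : (0:ℝ) < 1 - α := by linarith
  have hΓ1α : Real.Gamma (1 - α) ≠ 0 := (Real.Gamma_pos_of_pos h1α).ne'
  have hsum : (0:ℝ) < μ + 1 - α := by linarith
  have hΓsum : Real.Gamma (μ + 1 - α) ≠ 0 := (Real.Gamma_pos_of_pos hsum).ne'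
  have key : ∀ ξ : ℝ, 0 < ξ →
      (1 / Real.Gamma (1 - α)) * (∫ τ in (0:ℝ)..ξ, (ξ - τ) ^ (-α) * deriv (fun s => c * s ^ μ) τ)
        = (c * Real.Gamma (μ + 1) / Real.Gamma (μ + 1 - α)) * ξ ^ (μ - α) := by
    intro ξ hξ
    have hderiv : ∀ τ : ℝ, 0 < τ → deriv (fun s => c * s ^ μ) τ = c * (μ * τ ^ (μ - 1)) := by
      intro τ hτ
      exact (HasDerivAt.const_mul c (Real.hasDerivAt_rpow_const (Or.inl hτ.ne'))).deriv
    have hcongr : (∫ τ in (0:ℝ)..ξ, (ξ - τ) ^ (-α) * deriv (fun s => c * s ^ μ) τ)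
        = ∫ τ in (0:ℝ)..ξ, (c * μ) * ((ξ - τ) ^ (-α) * τ ^ (μ - 1)) := by
      apply intervalIntegral.integral_congr_ae
      filter_upwards with τ hτ
      rw [Set.uIoc_of_le hξ.le] at hτ
      rw [hderiv τ hτ.1]
      ring
    rw [hcongr, intervalIntegral.integral_const_mul, beta_scaled_real hξ hμ hα0 hα1]
    have hrec : Real.Gamma (μ + 1) = μ * Real.Gamma μ := Real.Gamma_add_one hμ.ne'
    field_simp
    rw [hrec]
    ring
  have houter : caputoJ α (fun s => c * s ^ μ) t =
      ∫ ξ in (0:ℝ)..t, (c * Real.Gamma (μ + 1) / Real.Gamma (μ + 1 - α)) * ξ ^ (μ - α) := by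
    unfold caputoJ
    apply intervalIntegral.integral_congr_ae
    filter_upwards with ξ hξ
    rw [Set.uIoc_of_le ht.le] at hξ
    exact key ξ hξ.1
  rw [houter, intervalIntegral.integral_const_mul,
    integral_rpow (Or.inl (by linarith : (-1:ℝ) < μ - α))]
  rw [Real.zero_rpow (by linarith : μ - α + 1 ≠ 0)]
  have hrec2 : Real.Gamma (μ + 2 - α) = (μ + 1 - α) * Real.Gamma (μ + 1 - α) := by
    have := Real.Gamma_add_one hsum.ne'
    rw [(by ring : μ + 1 - α + 1 = μ + 2 - α)] at this
    exact this
  have hexp : μ - α + 1 = μ + 1 - α := by ring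
  rw [hexp, hrec2]
  field_simp
  try ring
  try exact Or.inl trivial

/-- `caputoJ α f t` for `t > 0` only depends on the values of `f` on `(0, ∞)`. -/
lemma caputoJ_congr {α : ℝ} {f g : ℝ → ℝ} (h : ∀ s, 0 < s → f s = g s) {t : ℝ} (ht : 0 < t) :
    caputoJ α f t = caputoJ α g t := by
  unfold caputoJ
  apply intervalIntegral.integral_congr_ae
  filter_upwards with ξ hξ
  rw [Set.uIoc_of_le ht.le] at hξ
  congr 1
  apply intervalIntegral.integral_congr_ae
  filter_upwards with τ hτ
  rw [Set.uIoc_of_le hξ.1.le] at hτ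
  have hfg : f =ᶠ[nhds τ] g :=
    Filter.eventuallyEq_of_mem (Ioi_mem_nhds hτ.1) (fun s hs => h s hs)
  rw [hfg.deriv_eq]

theorem iterated_caputoJ_rpow (α lam : ℝ) (hα0 : 0 < α) (hα1 : α < 1) (hlam : 0 < lam)
    (n : ℕ) (hn : 1 ≤ n) (t : ℝ) (ht : 0 < t) :
    (caputoJ α)^[n] (fun s => s ^ lam) t =
      (Real.Gamma (1 + lam) / Real.Gamma (1 + lam + n * (1 - α))) *
        t ^ (lam + n * (1 - α)) := by
  clear hn
  induction n generalizing t with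
  | zero =>
    simp only [Function.iterate_zero, id_eq, Nat.cast_zero, zero_mul, add_zero]
    rw [div_self (Real.Gamma_pos_of_pos (by linarith : (0:ℝ) < 1 + lam)).ne', one_mul]
  | succ n ih =>
    have h1α : (0:ℝ) < 1 - α := by linarith
    have hμ : 0 < lam + n * (1 - α) := by positivity
    rw [Function.iterate_succ_apply',
      caputoJ_congr (fun s hs => ih s hs) ht,
      caputoJ_rpow (Real.Gamma (1 + lam) / Real.Gamma (1 + lam + n * (1 - α))) hα0 hα1 hμ ht]
    have e1 : lam + n * (1 - α) + 1 = 1 + lam + n * (1 - α) := by ring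
    have e2 : lam + n * (1 - α) + 2 - α = 1 + lam + ((n : ℕ) + 1 : ℕ) * (1 - α) := by
      push_cast; ring
    have e3 : lam + n * (1 - α) + 1 - α = lam + ((n : ℕ) + 1 : ℕ) * (1 - α) := by
      push_cast; ring
    rw [e3, e2, e1]
    have hΓn : Real.Gamma (1 + lam + n * (1 - α)) ≠ 0 :=
      (Real.Gamma_pos_of_pos (by linarith)).ne'
    have hpos1 : (0:ℝ) ≤ ((n:ℝ) + 1) * (1 - α) := mul_nonneg (by positivity) h1α.le
    have hΓn1 : Real.Gamma (1 + lam + ((n : ℕ) + 1 : ℕ) * (1 - α)) ≠ 0 :=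
      (Real.Gamma_pos_of_pos (by push_cast; linarith)).ne'
    field_simp
end

section
/- Let 0 < α < 1 and define u : ℝ → ℝ by u(t) = ∑_{k=0}^∞ (−1)^k t^(k(1−α)) / Γ(1 + k(1−α)) for t ≥ 0 (so u(t) = E_{1−α}(−t^(1−α))). Then for every t > 0, u′(t) = −(1/Γ(1−α)) · d/dt [ ∫₀ᵗ (t−τ)^(−α) u(τ) dτ ], i.e. u′(t) equals the negative of the Riemann–Liouville fractional derivative of order α of u at t. -/
open Real MeasureTheory

/-- `u t = E_{1-α}(-t^(1-α)) = ∑ₖ (-1)^k t^(k(1-α)) / Γ(1 + k(1-α))`. -/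
noncomputable def mlCos (α : ℝ) : ℝ → ℝ :=
  fun t => ∑' k : ℕ,
    (-1 : ℝ) ^ k * t ^ ((k : ℝ) * (1 - α)) / Real.Gamma (1 + (k : ℝ) * (1 - α))

/-!
With `ν = 1 - α`, the Riemann–Liouville integral `∫₀ˢ (s - τ)^(ν-1) f(τ) dτ` sends
`τ^(kν) / Γ(1 + kν)` to `Γ(ν) s^((k+1)ν) / Γ(1 + (k+1)ν)` (a Beta integral). Integrating the series
of `u` term by term therefore shifts it by one index, which gives
`∫₀ˢ (s - τ)^(-α) u(τ) dτ = Γ(1 - α) (1 - u(s))` for every `s > 0`. Since this holds on a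
neighbourhood of `t`, the derivatives of both sides at `t` agree. The term-by-term integration is
justified by absolute convergence, which follows from the ratio test and the bound
`Γ(a + ν) ≥ (a - 1)^ν Γ(a)` coming from the log-convexity of `Γ`.
-/

open Filter Topology

theorem Real.Gamma_mul_rpow_le_Gamma_add {a ν : ℝ} (ha : 1 < a) (hν : 0 < ν) :
    Gamma a * (a - 1) ^ ν ≤ Gamma (a + ν) := by
  have ha₀ : 0 < a - 1 := sub_pos.2 ha
  have hΓa : 0 < Gamma a := Gamma_pos_of_pos (by linarith)
  -- slopes of `log ∘ Γ` on `[a - 1, a]` and `[a, a + ν]`; the first one is `log (a - 1)`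
  have hslope := convexOn_log_Gamma.slope_mono_adjacent (Set.mem_Ioi.2 ha₀)
    (Set.mem_Ioi.2 (by linarith : (0:ℝ) < a + ν)) (sub_lt_self a one_pos) (lt_add_of_pos_right a hν)
  have hrec : Gamma a = (a - 1) * Gamma (a - 1) := by
    simpa using Gamma_add_one ha₀.ne'
  have hlog : log (Gamma a) - log (Gamma (a - 1)) = log (a - 1) := by
    rw [hrec, log_mul ha₀.ne' (Gamma_pos_of_pos ha₀).ne']; ring
  simp only [Function.comp, sub_sub_cancel, div_one, hlog, add_sub_cancel_left] at hslope
  rw [le_div_iff₀ hν] at hslope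
  rw [← log_le_log_iff (by positivity) (Gamma_pos_of_pos (by linarith)),
    log_mul hΓa.ne' (by positivity), log_rpow ha₀]
  linarith

theorem summable_rpow_mul_div_Gamma {ν x : ℝ} (hν : 0 < ν) (hx : 0 ≤ x) :
    Summable fun k : ℕ => x ^ ((k : ℝ) * ν) / Gamma (1 + (k : ℝ) * ν) := by
  refine summable_of_ratio_norm_eventually_le (r := 1 / 2) (by norm_num) ?_
  have hgrowth : Tendsto (fun k : ℕ => ((k : ℝ) * ν) ^ ν) atTop atTop :=
    (tendsto_rpow_atTop hν).comp (tendsto_natCast_atTop_atTop.atTop_mul_const hν)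
  filter_upwards [hgrowth.eventually_ge_atTop (2 * x ^ ν), eventually_ge_atTop 1]
    with k hk hk1
  have hkν : 0 < (k : ℝ) * ν := mul_pos (by exact_mod_cast hk1) hν
  have hΓpos : 0 < Gamma (1 + k * ν) := Gamma_pos_of_pos (by linarith)
  have hΓ : Gamma (1 + k * ν) * (2 * x ^ ν) ≤ Gamma (1 + k * ν + ν) := by
    have h := Gamma_mul_rpow_le_Gamma_add (lt_add_of_pos_right 1 hkν) hν
    rw [add_sub_cancel_left] at h
    exact (mul_le_mul_of_nonneg_left hk hΓpos.le).trans h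
  have hpow : x ^ (((k + 1 : ℕ) : ℝ) * ν) = x ^ ((k : ℝ) * ν) * x ^ ν := by
    rw [← rpow_add' hx (by positivity)]; push_cast; ring_nf
  have hA : 0 ≤ x ^ ((k : ℝ) * ν) := rpow_nonneg hx _
  rw [norm_of_nonneg (by positivity), norm_of_nonneg (by positivity), hpow,
    show 1 + ((k + 1 : ℕ) : ℝ) * ν = 1 + k * ν + ν by push_cast; ring,
    div_le_iff₀ (Gamma_pos_of_pos (by positivity))]
  calc x ^ ((k : ℝ) * ν) * x ^ ν
      = 1 / 2 * (x ^ ((k : ℝ) * ν) / Gamma (1 + k * ν)) * (Gamma (1 + k * ν) * (2 * x ^ ν)) := by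
        field_simp
    _ ≤ 1 / 2 * (x ^ ((k : ℝ) * ν) / Gamma (1 + k * ν)) * Gamma (1 + k * ν + ν) := by
        gcongr

theorem summable_mlCos_series {α x : ℝ} (hα : α < 1) (hx : 0 ≤ x) :
    Summable fun k : ℕ =>
      (-1 : ℝ) ^ k * x ^ ((k : ℝ) * (1 - α)) / Gamma (1 + (k : ℝ) * (1 - α)) := by
  refine (summable_rpow_mul_div_Gamma (sub_pos.2 hα) hx).of_norm_bounded fun k => le_of_eq ?_
  rw [norm_div, norm_mul, norm_pow, norm_neg, norm_one, one_pow, one_mul,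
    norm_of_nonneg (rpow_nonneg hx _), norm_of_nonneg (Gamma_pos_of_pos (by positivity)).le]

theorem mlCos_eq_one_sub_tsum {α x : ℝ} (hα : α < 1) (hx : 0 ≤ x) :
    mlCos α x = 1 - ∑' k : ℕ, (-1 : ℝ) ^ k * x ^ (((k + 1 : ℕ) : ℝ) * (1 - α)) /
      Gamma (1 + ((k + 1 : ℕ) : ℝ) * (1 - α)) := by
  rw [mlCos, (summable_mlCos_series hα hx).tsum_eq_zero_add]
  simp only [pow_succ, mul_neg_one, neg_mul, neg_div, tsum_neg]
  simp [sub_eq_add_neg]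

theorem integral_sub_rpow_mul_rpow {c ν s : ℝ} (hc : -1 < c) (hν : 0 < ν) (hs : 0 < s) :
    ∫ τ in (0:ℝ)..s, (s - τ) ^ (ν - 1) * τ ^ c =
      s ^ (c + ν) * (Gamma (1 + c) * Gamma ν / Gamma (1 + c + ν)) := by
  have hbeta := Complex.betaIntegral_scaled (1 + c : ℝ) ν hs
  rw [Complex.betaIntegral_eq_Gamma_mul_div _ _ (by simp; linarith) (by simpa)] at hbeta
  have hlhs : ∫ τ in (0:ℝ)..s, (τ : ℂ) ^ (((1 + c : ℝ) : ℂ) - 1) * ((s : ℂ) - τ) ^ ((ν : ℂ) - 1) =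
      ((∫ τ in (0:ℝ)..s, (s - τ) ^ (ν - 1) * τ ^ c : ℝ) : ℂ) := by
    rw [← intervalIntegral.integral_ofReal]
    refine intervalIntegral.integral_congr fun τ hτ => ?_
    rw [Set.uIcc_of_le hs.le] at hτ
    rw [Complex.ofReal_mul, Complex.ofReal_cpow hτ.1, Complex.ofReal_cpow (sub_nonneg.2 hτ.2)]
    push_cast
    ring_nf
  have hrhs : (s : ℂ) ^ (((1 + c : ℝ) : ℂ) + ν - 1) = ((s ^ (c + ν) : ℝ) : ℂ) := by
    rw [Complex.ofReal_cpow hs.le]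
    push_cast
    ring_nf
  rw [hlhs, hrhs, ← Complex.ofReal_add, Complex.Gamma_ofReal, Complex.Gamma_ofReal,
    Complex.Gamma_ofReal] at hbeta
  exact_mod_cast hbeta

theorem intervalIntegrable_sub_rpow_mul_rpow {c ν s : ℝ} (hc : 0 ≤ c) (hν : 0 < ν) :
    IntervalIntegrable (fun τ => (s - τ) ^ (ν - 1) * τ ^ c) volume 0 s := by
  refine IntervalIntegrable.mul_continuousOn ?_
    (continuousOn_of_forall_continuousAt fun τ _ => continuousAt_rpow_const τ c (Or.inr hc))
  simpa using ((intervalIntegral.intervalIntegrable_rpow' (by linarith)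
    (a := 0) (b := s)).comp_sub_left s).symm

theorem integral_mul_tsum_of_nonneg {X : Type*} [MeasurableSpace X] {μ : Measure X}
    {g : X → ℝ} {φ : ℕ → X → ℝ} {a : ℕ → ℝ} (hg : ∀ᵐ x ∂μ, 0 ≤ g x)
    (hφ : ∀ k, ∀ᵐ x ∂μ, 0 ≤ φ k x) (hint : ∀ k, Integrable (fun x => g x * φ k x) μ)
    (hsum : Summable fun k => |a k| * ∫ x, g x * φ k x ∂μ) :
    ∫ x, g x * ∑' k, a k * φ k x ∂μ = ∑' k, a k * ∫ x, g x * φ k x ∂μ := by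
  have hnorm : ∀ k, ∫ x, ‖a k * (g x * φ k x)‖ ∂μ = |a k| * ∫ x, g x * φ k x ∂μ := by
    intro k
    rw [← integral_const_mul]
    refine integral_congr_ae ?_
    filter_upwards [hg, hφ k] with x hgx hφx
    rw [norm_mul, norm_of_nonneg (mul_nonneg hgx hφx), norm_eq_abs]
  calc ∫ x, g x * ∑' k, a k * φ k x ∂μ = ∫ x, ∑' k, a k * (g x * φ k x) ∂μ := by
        congr 1 with x
        rw [← tsum_mul_left]
        exact tsum_congr fun k => by ring
    _ = ∑' k, ∫ x, a k * (g x * φ k x) ∂μ :=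
        (integral_tsum_of_summable_integral_norm (fun k => (hint k).const_mul _)
          (by simpa only [hnorm] using hsum)).symm
    _ = ∑' k, a k * ∫ x, g x * φ k x ∂μ := tsum_congr fun k => integral_const_mul _ _

theorem integral_sub_rpow_mul_mlCos {α s : ℝ} (hα : α < 1) (hs : 0 < s) :
    ∫ τ in (0:ℝ)..s, (s - τ) ^ (-α) * mlCos α τ = Gamma (1 - α) * (1 - mlCos α s) := by
  have hν : 0 < 1 - α := sub_pos.2 hα
  have hΓ : ∀ k : ℕ, 0 < Gamma (1 + (k : ℝ) * (1 - α)) := fun k => Gamma_pos_of_pos (by positivity)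
  have hpower : ∀ k : ℕ, ∫ τ in Set.Ioc 0 s, (s - τ) ^ (-α) * τ ^ ((k : ℝ) * (1 - α)) =
      s ^ (((k + 1 : ℕ) : ℝ) * (1 - α)) *
        (Gamma (1 + k * (1 - α)) * Gamma (1 - α) / Gamma (1 + ((k + 1 : ℕ) : ℝ) * (1 - α))) := by
    intro k
    have h := integral_sub_rpow_mul_rpow (c := k * (1 - α))
      (by linarith [mul_nonneg k.cast_nonneg hν.le]) hν hs
    rw [sub_sub_cancel_left, intervalIntegral.integral_of_le hs.le] at h
    rw [h]
    push_cast
    ring_nf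
  have hint : ∀ k : ℕ, Integrable (fun τ => (s - τ) ^ (-α) * τ ^ ((k : ℝ) * (1 - α)))
      (volume.restrict (Set.Ioc 0 s)) := by
    intro k
    have h := intervalIntegrable_sub_rpow_mul_rpow (s := s) (mul_nonneg k.cast_nonneg hν.le) hν
    rw [sub_sub_cancel_left] at h
    exact (intervalIntegrable_iff_integrableOn_Ioc_of_le hs.le).1 h
  have hsum : Summable fun k : ℕ => |(-1 : ℝ) ^ k / Gamma (1 + k * (1 - α))| *
      ∫ τ in Set.Ioc 0 s, (s - τ) ^ (-α) * τ ^ ((k : ℝ) * (1 - α)) := by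
    refine (((summable_nat_add_iff 1).2 (summable_rpow_mul_div_Gamma hν hs.le)).mul_left
      (Gamma (1 - α))).congr fun k => ?_
    rw [hpower, abs_div, abs_pow, abs_neg, abs_one, one_pow, abs_of_pos (hΓ k)]
    field_simp
  calc ∫ τ in (0:ℝ)..s, (s - τ) ^ (-α) * mlCos α τ
      = ∫ τ in Set.Ioc 0 s, (s - τ) ^ (-α) *
          ∑' k : ℕ, (-1 : ℝ) ^ k / Gamma (1 + k * (1 - α)) * τ ^ ((k : ℝ) * (1 - α)) := by
        rw [intervalIntegral.integral_of_le hs.le]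
        simp only [mlCos, div_mul_eq_mul_div]
    _ = ∑' k : ℕ, (-1 : ℝ) ^ k / Gamma (1 + k * (1 - α)) *
          ∫ τ in Set.Ioc 0 s, (s - τ) ^ (-α) * τ ^ ((k : ℝ) * (1 - α)) :=
        integral_mul_tsum_of_nonneg
          (ae_restrict_of_forall_mem measurableSet_Ioc fun τ hτ =>
            rpow_nonneg (sub_nonneg.2 hτ.2) _)
          (fun k => ae_restrict_of_forall_mem measurableSet_Ioc fun τ hτ => rpow_nonneg hτ.1.le _)
          hint hsum
    _ = Gamma (1 - α) * ∑' k : ℕ, (-1 : ℝ) ^ k * s ^ (((k + 1 : ℕ) : ℝ) * (1 - α)) /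
          Gamma (1 + ((k + 1 : ℕ) : ℝ) * (1 - α)) := by
        rw [← tsum_mul_left]
        refine tsum_congr fun k => ?_
        rw [hpower]
        field_simp
    _ = Gamma (1 - α) * (1 - mlCos α s) := by rw [mlCos_eq_one_sub_tsum hα hs.le]; ring

theorem mlCos_solves_fractional_ode_general (α : ℝ) (hα1 : α < 1)
    (t : ℝ) (ht : 0 < t) :
    deriv (mlCos α) t =
      -((1 / Real.Gamma (1 - α)) *
        deriv (fun s => ∫ τ in (0:ℝ)..s, (s - τ) ^ (-α) * mlCos α τ) t) := by
  have hI : (fun s => ∫ τ in (0:ℝ)..s, (s - τ) ^ (-α) * mlCos α τ) =ᶠ[𝓝 t]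
      fun s => Gamma (1 - α) * (1 - mlCos α s) :=
    (eventually_gt_nhds ht).mono fun s hs => integral_sub_rpow_mul_mlCos hα1 hs
  rw [hI.deriv_eq, deriv_const_mul_field, deriv_const_sub]
  field_simp [(Gamma_pos_of_pos (sub_pos.2 hα1)).ne']

theorem mlCos_solves_fractional_ode (α : ℝ) (hα0 : 0 < α) (hα1 : α < 1)
    (t : ℝ) (ht : 0 < t) :
    deriv (mlCos α) t =
      -((1 / Real.Gamma (1 - α)) *
        deriv (fun s => ∫ τ in (0:ℝ)..s, (s - τ) ^ (-α) * mlCos α τ) t) :=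
  mlCos_solves_fractional_ode_general α hα1 t ht
end

section
/- Let 0 < α < 1 and define v : ℝ → ℝ by v(t) = ∑_{k=0}^∞ (−1)^k t^(k(1−α)+2) / Γ(k(1−α) + 3) for t ≥ 0 (so v(t) = t² E_{1−α,3}(−t^(1−α))). Then for every t > 0, v′(t) = −(1/Γ(1−α)) · d/dt [ ∫₀ᵗ (t−τ)^(−α) v(τ) dτ ] + t, i.e. v′(t) equals the negative of the Riemann–Liouville fractional derivative of order α of v at t, plus the source t. -/
open Real MeasureTheory

/-- `v t = t² E_{1-α,3}(-t^(1-α)) = ∑ₖ (-1)^k t^(k(1-α)+2) / Γ(k(1-α) + 3)`. -/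
noncomputable def mlSin (α : ℝ) : ℝ → ℝ :=
  fun t => ∑' k : ℕ,
    (-1 : ℝ) ^ k * t ^ ((k : ℝ) * (1 - α) + 2) / Real.Gamma ((k : ℝ) * (1 - α) + 3)

/-! For `t > 0`, `v t = t² E_{1-α,3}(-t^(1-α))`, and `E_{1-α,3}` is entire because the lower bound
`Γ(x) ≥ A^(x-1) e^(-A)` makes its coefficients decay faster than any geometric sequence; hence `v`
is differentiable. Integrating the series of `v` term by term against `(s - τ)^(-α)`, the Beta
integral sends the `k`-th term to `-Γ(1-α)` times the `(k+1)`-st, so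
`∫₀ˢ (s - τ)^(-α) v τ dτ = Γ(1-α) (s²/2 - v s)`; differentiating this identity gives the equation. -/

open Set Topology

namespace Real

lemma rpow_mul_exp_neg_le_Gamma {A x : ℝ} (hA : 0 < A) (hx : 1 ≤ x) :
    A ^ (x - 1) * exp (-A) ≤ Gamma x := by
  have hint : IntegrableOn (fun t => exp (-t) * t ^ (x - 1)) (Ioi 0) :=
    GammaIntegral_convergent (by linarith)
  calc A ^ (x - 1) * exp (-A) = ∫ t in Ioi A, A ^ (x - 1) * exp (-t) := by
        rw [integral_const_mul, integral_exp_neg_Ioi]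
    _ ≤ ∫ t in Ioi A, exp (-t) * t ^ (x - 1) := by
        refine setIntegral_mono_on ((integrableOn_exp_neg_Ioi A).const_mul _)
          (hint.mono_set (Ioi_subset_Ioi hA.le)) measurableSet_Ioi fun t ht => ?_
        rw [mul_comm]
        gcongr
        exact le_of_lt ht
    _ ≤ ∫ t in Ioi 0, exp (-t) * t ^ (x - 1) :=
        setIntegral_mono_set hint
          (ae_restrict_of_forall_mem measurableSet_Ioi fun t ht =>
            mul_nonneg (exp_pos _).le (rpow_nonneg (le_of_lt ht) _))
          (Ioi_subset_Ioi hA.le).eventuallyLE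
    _ = Gamma x := (Gamma_eq_integral (by linarith)).symm

/-- Choosing `A` with `A ^ β = 2 r + 1` in `rpow_mul_exp_neg_le_Gamma` dominates the series by a
geometric one of ratio `r / (2 r + 1)`. -/
lemma summable_pow_div_Gamma {β c r : ℝ} (hβ : 0 < β) (hc : 1 ≤ c) (hr : 0 ≤ r) :
    Summable fun k : ℕ => r ^ k / Gamma (k * β + c) := by
  set A := (2 * r + 1) ^ β⁻¹
  have hA : 0 < A := by positivity
  have hAβ : A ^ β = 2 * r + 1 := rpow_inv_rpow (by positivity) hβ.ne'
  have hratio : r / (2 * r + 1) < 1 := by rw [div_lt_one (by positivity)]; linarith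
  refine Summable.of_nonneg_of_le
    (fun k => div_nonneg (by positivity) (Gamma_pos_of_pos (by positivity)).le) (fun k => ?_)
    ((summable_geometric_of_lt_one (by positivity) hratio).mul_left (exp A / A ^ (c - 1)))
  have hΓ : A ^ (c - 1) * (2 * r + 1) ^ k * exp (-A) ≤ Gamma (k * β + c) := by
    have h := rpow_mul_exp_neg_le_Gamma hA
      (le_add_of_nonneg_of_le (by positivity) hc : 1 ≤ (k : ℝ) * β + c)
    rwa [show (k : ℝ) * β + c - 1 = c - 1 + β * k by ring, rpow_add hA, rpow_mul hA.le, hAβ,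
      rpow_natCast] at h
  calc r ^ k / Gamma (k * β + c) ≤ r ^ k / (A ^ (c - 1) * (2 * r + 1) ^ k * exp (-A)) :=
        div_le_div_of_nonneg_left (by positivity) (by positivity) hΓ
    _ = exp A / A ^ (c - 1) * (r / (2 * r + 1)) ^ k := by
        rw [exp_neg, div_pow]
        field_simp

lemma integral_rpow_mul_sub_rpow {s b c : ℝ} (hs : 0 < s) (hb : 0 < b) (hc : 0 < c) :
    ∫ τ in 0..s, τ ^ (b - 1) * (s - τ) ^ (c - 1) =
      Gamma b * Gamma c / Gamma (b + c) * s ^ (b + c - 1) := by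
  have hbeta : Complex.betaIntegral b c =
      Complex.Gamma b * Complex.Gamma c / Complex.Gamma (b + c) := by
    rw [Complex.Gamma_mul_Gamma_eq_betaIntegral (by simpa) (by simpa), mul_div_cancel_left₀]
    exact Complex.Gamma_ne_zero_of_re_pos (by simp; positivity)
  have h := Complex.betaIntegral_scaled b c hs
  rw [hbeta] at h
  apply Complex.ofReal_injective
  rw [← intervalIntegral.integral_ofReal]
  convert h using 1
  · refine intervalIntegral.integral_congr fun τ hτ => ?_
    rw [uIcc_of_le hs.le] at hτ
    push_cast
    rw [Complex.ofReal_cpow hτ.1, Complex.ofReal_cpow (sub_nonneg.2 hτ.2)]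
    push_cast
    rfl
  · push_cast
    rw [Complex.ofReal_cpow hs.le, ← Complex.ofReal_add, Complex.Gamma_ofReal,
      Complex.Gamma_ofReal, Complex.Gamma_ofReal]
    push_cast
    ring

end Real

noncomputable def mittagLeffler (ν μ x : ℝ) : ℝ := ∑' k : ℕ, x ^ k / Gamma (k * ν + μ)

lemma summable_mittagLeffler {ν μ : ℝ} (hν : 0 < ν) (hμ : 1 ≤ μ) (x : ℝ) :
    Summable fun k : ℕ => x ^ k / Gamma (k * ν + μ) := by
  refine .of_norm <| (summable_pow_div_Gamma hν hμ (abs_nonneg x)).congr fun k => ?_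
  rw [norm_div, norm_pow, norm_eq_abs, norm_of_nonneg (Gamma_pos_of_pos (by positivity)).le]

/-- `E_{ν,μ}` is the sum of a power series of infinite radius of convergence. -/
lemma differentiable_mittagLeffler {ν μ : ℝ} (hν : 0 < ν) (hμ : 1 ≤ μ) :
    Differentiable ℝ (mittagLeffler ν μ) := by
  set p := FormalMultilinearSeries.ofScalars ℝ fun k : ℕ => (Gamma (k * ν + μ))⁻¹
  have hp : p.radius = ⊤ := ENNReal.eq_top_of_forall_nnreal_le fun r =>
    p.le_radius_of_summable_norm <| (summable_pow_div_Gamma hν hμ r.coe_nonneg).congr fun k => by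
      rw [FormalMultilinearSeries.ofScalars_norm, norm_inv,
        norm_of_nonneg (Gamma_pos_of_pos (by positivity)).le, div_eq_inv_mul]
  have hsum : mittagLeffler ν μ = p.sum := funext fun x => by
    simp only [mittagLeffler, FormalMultilinearSeries.sum, p,
      FormalMultilinearSeries.ofScalars_apply_eq, smul_eq_mul, div_eq_inv_mul]
  intro x
  rw [hsum]
  exact ((p.hasFPowerSeriesOnBall (by simp [hp])).analyticAt_of_mem (by simp [hp])).differentiableAt

noncomputable def mlSinTerm (α : ℝ) (k : ℕ) (t : ℝ) : ℝ :=
  (-1 : ℝ) ^ k * t ^ ((k : ℝ) * (1 - α) + 2) / Gamma ((k : ℝ) * (1 - α) + 3)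

section mlSin

variable {α : ℝ}

lemma mlSinTerm_zero (t : ℝ) : mlSinTerm α 0 t = t ^ 2 / 2 := by
  simp [mlSinTerm]

lemma abs_mlSinTerm_le (hα : α < 1) (k : ℕ) {τ s : ℝ} (hτ : 0 ≤ τ) (hτs : τ ≤ s) :
    |mlSinTerm α k τ| ≤ |mlSinTerm α k s| := by
  have hΓ : 0 < Gamma ((k : ℝ) * (1 - α) + 3) := Gamma_pos_of_pos (by nlinarith)
  simp only [mlSinTerm, abs_div, abs_mul, abs_pow, abs_neg, abs_one, one_pow, one_mul,
    abs_of_pos hΓ, abs_of_nonneg (rpow_nonneg hτ _), abs_of_nonneg (rpow_nonneg (hτ.trans hτs) _)]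
  gcongr

lemma hasSum_mlSinTerm (hα : α < 1) {t : ℝ} (ht : 0 < t) :
    HasSum (fun k => mlSinTerm α k t) (t ^ 2 * mittagLeffler (1 - α) 3 (-t ^ (1 - α))) := by
  refine ((summable_mittagLeffler (by linarith) (by norm_num) _).hasSum.mul_left (t ^ 2)).congr_fun
    fun k => ?_
  rw [mlSinTerm, neg_pow, rpow_add ht, mul_comm (k : ℝ), rpow_mul_natCast ht.le, rpow_two]
  ring

lemma mlSin_eq_mittagLeffler (hα : α < 1) {t : ℝ} (ht : 0 < t) :
    mlSin α t = t ^ 2 * mittagLeffler (1 - α) 3 (-t ^ (1 - α)) :=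
  (hasSum_mlSinTerm hα ht).tsum_eq

lemma differentiableAt_mlSin (hα : α < 1) {t : ℝ} (ht : 0 < t) :
    DifferentiableAt ℝ (mlSin α) t := by
  have hE := differentiable_mittagLeffler (μ := 3) (sub_pos.2 hα) (by norm_num)
  have hsmooth : DifferentiableAt ℝ (fun y => y ^ 2 * mittagLeffler (1 - α) 3 (-y ^ (1 - α))) t :=
    (differentiableAt_pow 2).mul (hE.differentiableAt.comp t (differentiableAt_id.rpow_const
      (Or.inl ht.ne')).neg)
  exact hsmooth.congr_of_eventuallyEq
    ((eventually_gt_nhds ht).mono fun y hy => mlSin_eq_mittagLeffler hα hy)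

lemma integral_sub_rpow_mul_mlSinTerm (hα : α < 1) {s : ℝ} (hs : 0 < s) (k : ℕ) :
    ∫ τ in 0..s, (s - τ) ^ (-α) * mlSinTerm α k τ = -Gamma (1 - α) * mlSinTerm α (k + 1) s := by
  have hβ : 0 < 1 - α := sub_pos.2 hα
  have hb : 0 < (k : ℝ) * (1 - α) + 3 := by positivity
  calc ∫ τ in 0..s, (s - τ) ^ (-α) * mlSinTerm α k τ
      = (-1) ^ k / Gamma (k * (1 - α) + 3) * ∫ τ in 0..s,
          τ ^ ((k * (1 - α) + 3) - 1) * (s - τ) ^ ((1 - α) - 1) := by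
        rw [← intervalIntegral.integral_const_mul]
        refine intervalIntegral.integral_congr fun τ _ => ?_
        simp only [mlSinTerm]
        ring_nf
    _ = -Gamma (1 - α) * mlSinTerm α (k + 1) s := by
        rw [Real.integral_rpow_mul_sub_rpow hs hb hβ, mlSinTerm]
        push_cast
        rw [show (k : ℝ) * (1 - α) + 3 + (1 - α) = (k + 1) * (1 - α) + 3 by ring,
          show ((k : ℝ) + 1) * (1 - α) + 3 - 1 = (k + 1) * (1 - α) + 2 by ring]
        field_simp
        ring

lemma integral_sub_rpow_mul_mlSin (hα : α < 1) {s : ℝ} (hs : 0 < s) :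
    ∫ τ in 0..s, (s - τ) ^ (-α) * mlSin α τ = Gamma (1 - α) * (s ^ 2 / 2 - mlSin α s) := by
  have hsum : ∀ {t : ℝ}, 0 < t → HasSum (fun k => mlSinTerm α k t) (mlSin α t) := fun ht =>
    mlSin_eq_mittagLeffler hα ht ▸ hasSum_mlSinTerm hα ht
  have hkernel : IntervalIntegrable (fun τ => (s - τ) ^ (-α)) volume 0 s := by
    simpa using ((intervalIntegral.intervalIntegrable_rpow' (a := 0) (b := s) (r := -α)
      (by linarith)).comp_sub_left s).symm
  have hterms : HasSum (fun k => ∫ τ in 0..s, (s - τ) ^ (-α) * mlSinTerm α k τ)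
      (∫ τ in 0..s, (s - τ) ^ (-α) * mlSin α τ) := by
    refine intervalIntegral.hasSum_integral_of_dominated_convergence
      (fun k τ => (s - τ) ^ (-α) * |mlSinTerm α k s|) (fun k => ?_) (fun k => ?_)
      (.of_forall fun τ _ => (hsum hs).summable.abs.mul_left _) ?_ ?_
    · exact (by unfold mlSinTerm; fun_prop : Measurable _).aestronglyMeasurable
    · refine .of_forall fun τ hτ => ?_
      rw [uIoc_of_le hs.le] at hτ
      rw [norm_mul, norm_of_nonneg (rpow_nonneg (sub_nonneg.2 hτ.2) _), norm_eq_abs]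
      exact mul_le_mul_of_nonneg_left (abs_mlSinTerm_le hα k hτ.1.le hτ.2)
        (rpow_nonneg (sub_nonneg.2 hτ.2) _)
    · simp_rw [tsum_mul_left]
      exact hkernel.mul_const _
    · refine .of_forall fun τ hτ => ?_
      rw [uIoc_of_le hs.le] at hτ
      exact (hsum hτ.1).mul_left _
  simp_rw [integral_sub_rpow_mul_mlSinTerm hα hs] at hterms
  have htail := ((hasSum_nat_add_iff' 1).2 (hsum hs)).mul_left (-Gamma (1 - α))
  simp only [Finset.range_one, Finset.sum_singleton, mlSinTerm_zero] at htail
  rw [hterms.unique htail]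
  ring

end mlSin

theorem mlSin_solves_fractional_ode_general (α : ℝ) (hα1 : α < 1)
    (t : ℝ) (ht : 0 < t) :
    deriv (mlSin α) t =
      -((1 / Real.Gamma (1 - α)) *
        deriv (fun s => ∫ τ in (0:ℝ)..s, (s - τ) ^ (-α) * mlSin α τ) t) + t := by
  have hΓ : Gamma (1 - α) ≠ 0 := (Gamma_pos_of_pos (sub_pos.2 hα1)).ne'
  have hv := (differentiableAt_mlSin hα1 ht).hasDerivAt
  have hI : (fun s => ∫ τ in (0:ℝ)..s, (s - τ) ^ (-α) * mlSin α τ) =ᶠ[𝓝 t]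
      fun s => Gamma (1 - α) * (s ^ 2 / 2 - mlSin α s) :=
    (eventually_gt_nhds ht).mono fun s hs => integral_sub_rpow_mul_mlSin hα1 hs
  have hsq : HasDerivAt (fun s : ℝ => s ^ 2 / 2) t t := by
    simpa using (hasDerivAt_pow 2 t).div_const 2
  have hJ : HasDerivAt (fun s => Gamma (1 - α) * (s ^ 2 / 2 - mlSin α s))
      (Gamma (1 - α) * (t - deriv (mlSin α) t)) t :=
    (hsq.sub hv).const_mul _
  rw [hI.deriv_eq, hJ.deriv]
  field_simp
  ring

theorem mlSin_solves_fractional_ode (α : ℝ) (hα0 : 0 < α) (hα1 : α < 1)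
    (t : ℝ) (ht : 0 < t) :
    deriv (mlSin α) t =
      -((1 / Real.Gamma (1 - α)) *
        deriv (fun s => ∫ τ in (0:ℝ)..s, (s - τ) ^ (-α) * mlSin α τ) t) + t :=
  mlSin_solves_fractional_ode_general α hα1 t ht
end
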